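/- For i ∈ ℕ, the quantities C_{3(i-1)}^{(3)}, C_{3(i-1)+1}^{(3)}, C_{3(i-1)+2}^{(3)} are given by the closed formulas: C_{3(i-1)}^{(3)} = (1/8)((i+1)(2i^2+i+1) − (1+(−1)^i)/2), C_{3(i-1)+1}^{(3)} = (1/8)((i+1)(2i^2+3i−1) + (1+(−1)^i)/2), and C_{3(i-1)+2}^{(3)} = (1/8)((i+1)(2i^2+5i+1) − (1+(−1)^i)/2). -/

import Mathlib

/-- `X_3 = {(1,-2,0), (-2,1,0), (-1,-1,1), (0,0,-1)}`. -/
def X3 : Set (Fin 3 → ℤ) := {![1, -2, 0], ![-2, 1, 0], ![-1, -1, 1], ![0, 0, -1]}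

def nonneg3 (v : Fin 3 → ℤ) : Prop := ∀ i, 0 ≤ v i

/-- Covering relation `v ⋖ w` on `Λ_3 = ℤ_{≥0}^3`. -/
def cov3 (v w : Fin 3 → ℤ) : Prop := nonneg3 v ∧ nonneg3 w ∧ ∃ x ∈ X3, v = w + x

/-- The order `≺` on `Λ_3`. -/
def prec3 : (Fin 3 → ℤ) → (Fin 3 → ℤ) → Prop := Relation.TransGen cov3

/-- The principal ideal `I(v) = {v} ∪ {w : w ≺ v}`. -/
def ideal3 (v : Fin 3 → ℤ) : Set (Fin 3 → ℤ) := {v} ∪ { w | prec3 w v }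

/-- `C_n^{(3)} = |I(n·e(1))|`. -/
noncomputable def C3 (n : ℕ) : ℕ := (ideal3 ![(n : ℤ), 0, 0]).ncard

/-- `C_{n,h}^{(3)}`: the number of elements of height `h` in `I(n·e(1))`. -/
noncomputable def C3h (n h : ℕ) : ℕ :=
  ({ w ∈ ideal3 ![(n : ℤ), 0, 0] | w 0 + w 1 + w 2 = (h : ℤ) }).ncard

/-!
Along a cover `v ⋖ w` the height `w₀ + w₁ + w₂` drops by one and the weight `w₀ + 2w₁ + 3w₂`
drops by `0` or `3`. Hence `I(n·e(1))` lies in the set of nonnegative `w` of weight `≤ n` and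
`≡ n (mod 3)`; conversely every other point of this set is covered by a point of it one level
higher, so climbing reaches `n·e(1)` and the two sets agree.

Splitting off the points of weight exactly `n + 3` gives `C_{n+3} = C_n + p(n + 3)`, where `p(m)`
counts the solutions of `a + 2b + 3c = m`, and separating `c = 0` gives
`p(m + 3) = p(m) + ⌊(m + 3)/2⌋ + 1`. The closed forms follow by induction on `k` for `n = 3k + r`.
-/

open Finset

def weight3 (w : Fin 3 → ℤ) : ℤ := w 0 + 2 * w 1 + 3 * w 2

def height3 (w : Fin 3 → ℤ) : ℤ := w 0 + w 1 + w 2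

def weightIdeal (n : ℕ) : Set (Fin 3 → ℤ) :=
  {w | nonneg3 w ∧ weight3 w ≤ n ∧ (3 : ℤ) ∣ n - weight3 w}

lemma nonneg3_iff {w : Fin 3 → ℤ} : nonneg3 w ↔ 0 ≤ w 0 ∧ 0 ≤ w 1 ∧ 0 ≤ w 2 := by
  simp [nonneg3, Fin.forall_fin_succ]

lemma mem_ideal3_of_cov3 {v w u : Fin 3 → ℤ} (hvw : cov3 v w) (hw : w ∈ ideal3 u) :
    v ∈ ideal3 u := by
  rcases hw with rfl | hw
  · exact Or.inr (.single hvw)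
  · exact Or.inr (.head hvw hw)

lemma ideal3_subset {u : Fin 3 → ℤ} {S : Set (Fin 3 → ℤ)} (hu : u ∈ S)
    (hS : ∀ v w, cov3 v w → w ∈ S → v ∈ S) : ideal3 u ⊆ S := by
  rintro w (rfl | hw)
  · exact hu
  · induction hw using Relation.TransGen.head_induction_on with
    | single h => exact hS _ _ h hu
    | head h _ ih => exact hS _ _ h ih

lemma cov3_weight3 {v w : Fin 3 → ℤ} (h : cov3 v w) :
    weight3 v = weight3 w ∨ weight3 v = weight3 w - 3 := by
  obtain ⟨-, -, x, hx, rfl⟩ := h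
  simp only [X3, Set.mem_insert_iff, Set.mem_singleton_iff] at hx
  rcases hx with rfl | rfl | rfl | rfl <;> simp [weight3] <;> omega

lemma cov3_sub {w x : Fin 3 → ℤ} (hx : x ∈ X3) (hw : nonneg3 w) (hwx : nonneg3 (w - x)) :
    cov3 w (w - x) :=
  ⟨hw, hwx, x, hx, (sub_add_cancel w x).symm⟩

lemma exists_cov3_of_mem_weightIdeal {n : ℕ} {w : Fin 3 → ℤ} (hw : w ∈ weightIdeal n)
    (hne : w ≠ ![(n : ℤ), 0, 0]) :
    ∃ w' ∈ weightIdeal n, cov3 w w' ∧ height3 w' = height3 w + 1 := by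
  obtain ⟨hnn, hle, hdvd⟩ := hw
  rw [nonneg3_iff] at hnn
  unfold weight3 at hle hdvd
  by_cases hlow : w 0 + 2 * w 1 + 3 * w 2 ≤ n - 3
  · refine ⟨w - ![0, 0, -1], ?_, cov3_sub (by simp [X3]) ?_ ?_, ?_⟩ <;>
      simp [weightIdeal, nonneg3_iff, weight3, height3, -Matrix.sub_cons] <;> omega
  have hw12 : 1 ≤ w 1 ∨ 1 ≤ w 2 := by
    by_contra! h
    exact hne (by ext i; fin_cases i <;> simp <;> omega)
  rcases hw12 with h1 | h2
  · refine ⟨w - ![-2, 1, 0], ?_, cov3_sub (by simp [X3]) ?_ ?_, ?_⟩ <;>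
      simp [weightIdeal, nonneg3_iff, weight3, height3, -Matrix.sub_cons] <;> omega
  · refine ⟨w - ![-1, -1, 1], ?_, cov3_sub (by simp [X3]) ?_ ?_, ?_⟩ <;>
      simp [weightIdeal, nonneg3_iff, weight3, height3, -Matrix.sub_cons] <;> omega

lemma height3_le_of_mem_weightIdeal {n : ℕ} {w : Fin 3 → ℤ} (hw : w ∈ weightIdeal n) :
    height3 w ≤ n := by
  obtain ⟨hnn, hle, -⟩ := hw
  rw [nonneg3_iff] at hnn
  unfold weight3 at hle
  unfold height3
  omega

lemma mem_ideal3_of_mem_weightIdeal {n : ℕ} {w : Fin 3 → ℤ} (hw : w ∈ weightIdeal n) :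
    w ∈ ideal3 ![(n : ℤ), 0, 0] := by
  obtain ⟨d, hd⟩ : ∃ d : ℕ, height3 w + d = n :=
    ⟨(n - height3 w).toNat, by have := height3_le_of_mem_weightIdeal hw; omega⟩
  induction d generalizing w with
  | zero =>
    by_contra hnot
    obtain ⟨w', hw', -, hh⟩ :=
      exists_cov3_of_mem_weightIdeal hw (by rintro rfl; exact hnot (Or.inl rfl))
    have := height3_le_of_mem_weightIdeal hw'
    omega
  | succ d ih =>
    by_cases htop : w = ![(n : ℤ), 0, 0]
    · exact htop ▸ Or.inl rfl
    obtain ⟨w', hw', hcov, hh⟩ := exists_cov3_of_mem_weightIdeal hw htop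
    exact mem_ideal3_of_cov3 hcov (ih hw' (by omega))

lemma ideal3_eq_weightIdeal (n : ℕ) : ideal3 ![(n : ℤ), 0, 0] = weightIdeal n := by
  refine subset_antisymm (ideal3_subset ?_ fun v w hvw hw ↦ ?_) fun w ↦ mem_ideal3_of_mem_weightIdeal
  · simp [weightIdeal, nonneg3_iff, weight3]
  · obtain ⟨-, hle, hdvd⟩ := hw
    refine ⟨hvw.1, ?_, ?_⟩ <;> rcases cov3_weight3 hvw with h | h <;> rw [h] <;> omega

def idealTriples (n : ℕ) : Finset (ℕ × ℕ × ℕ) :=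
  {p ∈ range (n + 1) ×ˢ range (n + 1) ×ˢ range (n + 1) |
    p.1 + 2 * p.2.1 + 3 * p.2.2 ≤ n ∧ p.1 + 2 * p.2.1 + 3 * p.2.2 ≡ n [MOD 3]}

def weightTriples (n : ℕ) : Finset (ℕ × ℕ × ℕ) :=
  {p ∈ range (n + 1) ×ˢ range (n + 1) ×ˢ range (n + 1) | p.1 + 2 * p.2.1 + 3 * p.2.2 = n}

lemma weightIdeal_eq_image (n : ℕ) :
    weightIdeal n = (fun p : ℕ × ℕ × ℕ ↦ ![(p.1 : ℤ), p.2.1, p.2.2]) '' idealTriples n := by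
  ext w
  constructor
  · rintro ⟨hnn, hle, hdvd⟩
    rw [nonneg3_iff] at hnn
    unfold weight3 at hle hdvd
    refine ⟨((w 0).toNat, (w 1).toNat, (w 2).toNat), ?_, ?_⟩
    · simp only [idealTriples, mem_coe, mem_filter, mem_product, mem_range]
      unfold Nat.ModEq
      omega
    · ext i; fin_cases i <;> simp <;> omega
  · rintro ⟨⟨a, b, c⟩, hp, rfl⟩
    simp only [idealTriples, mem_coe, mem_filter, mem_product, mem_range] at hp
    unfold Nat.ModEq at hp
    simp [weightIdeal, nonneg3_iff, weight3]
    omega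

lemma C3_eq_card_idealTriples (n : ℕ) : C3 n = #(idealTriples n) := by
  rw [C3, ideal3_eq_weightIdeal, weightIdeal_eq_image, Set.ncard_image_of_injective,
    Set.ncard_coe_finset]
  intro p q h
  have h0 := congr_fun h 0
  have h1 := congr_fun h 1
  have h2 := congr_fun h 2
  simp only [Matrix.cons_val, Nat.cast_inj] at h0 h1 h2
  exact Prod.ext h0 (Prod.ext h1 h2)

lemma card_idealTriples_add_three (n : ℕ) :
    #(idealTriples (n + 3)) = #(idealTriples n) + #(weightTriples (n + 3)) := by
  rw [← card_union_of_disjoint]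
  · congr 1
    ext ⟨a, b, c⟩
    simp only [idealTriples, weightTriples, mem_union, mem_filter, mem_product, mem_range]
    unfold Nat.ModEq
    omega
  · rw [disjoint_left]
    rintro ⟨a, b, c⟩
    simp only [idealTriples, weightTriples, mem_filter, mem_product, mem_range]
    omega

lemma card_weightTriples_add_three (n : ℕ) :
    #(weightTriples (n + 3)) = #(weightTriples n) + ((n + 3) / 2 + 1) := by
  have hsplit : weightTriples (n + 3) =
      (weightTriples n).image (fun p ↦ (p.1, p.2.1, p.2.2 + 1)) ∪
        (range ((n + 3) / 2 + 1)).image (fun b ↦ (n + 3 - 2 * b, b, 0)) := by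
    ext ⟨a, b, c⟩
    simp only [weightTriples, mem_union, mem_image, mem_filter, mem_product, mem_range,
      Prod.ext_iff, Prod.exists]
    constructor
    · rintro ⟨-, h⟩
      rcases c with _ | c
      · exact Or.inr ⟨b, by omega, by omega, rfl, rfl⟩
      · exact Or.inl ⟨a, b, c, ⟨by omega, by omega⟩, rfl, rfl, rfl⟩
    · rintro (⟨a, b, c, ⟨-, h⟩, rfl, rfl, rfl⟩ | ⟨b, hb, rfl, rfl, rfl⟩) <;> omega
  rw [hsplit, card_union_of_disjoint, card_image_of_injective, card_image_of_injective,
    card_range]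
  · intro b b' h; simpa using congr_arg (·.2.1) h
  · intro p q h; simpa [Prod.ext_iff] using h
  · rw [disjoint_left]
    simp only [mem_image, not_exists, not_and]
    rintro _ ⟨p, -, rfl⟩ b - h
    simp [Prod.ext_iff] at h

lemma Nat.cast_div_two_eq (m : ℕ) : ((m / 2 : ℕ) : ℚ) = (2 * m - 1 + (-1) ^ m) / 4 := by
  rcases Nat.even_or_odd' m with ⟨t, rfl | rfl⟩
  · rw [Nat.mul_div_cancel_left t two_pos, pow_mul]
    push_cast
    ring
  · rw [show (2 * t + 1) / 2 = t by omega, pow_succ, pow_mul]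
    push_cast
    ring

lemma neg_one_pow_three_mul_add {R : Type*} [Monoid R] [HasDistribNeg R] (k r : ℕ) :
    (-1 : R) ^ (3 * k + r) = (-1) ^ k * (-1) ^ r := by
  rw [pow_add, pow_mul, show (-1 : R) ^ 3 = -1 by simp [pow_succ]]

lemma card_weightTriples_eq (k r : ℕ) (hr : r < 3) :
    (#(weightTriples (3 * k + r)) : ℚ) =
      (3 * (k + 1) ^ 2 + 2 * r * (k + 1) + (-1) ^ r * (1 - (-1) ^ (k + 1)) / 2) / 4 := by
  induction k with
  | zero => interval_cases r <;> norm_num <;> norm_cast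
  | succ k ih =>
    rw [show 3 * (k + 1) + r = 3 * k + r + 3 by ring, card_weightTriples_add_three]
    push_cast
    rw [ih, Nat.cast_div_two_eq, show 3 * k + r + 3 = 3 * (k + 1) + r by ring,
      neg_one_pow_three_mul_add]
    push_cast
    ring

lemma card_idealTriples_eq (k r : ℕ) (hr : r < 3) :
    (#(idealTriples (3 * k + r)) : ℚ) = (1 / 8) * ((k + 2) * (2 * (k + 1) ^ 2 +
      (2 * r + 1) * (k + 1) + (-1) ^ r) - (-1) ^ r * (1 + (-1) ^ (k + 1)) / 2) := by
  induction k with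
  | zero => interval_cases r <;> norm_num <;> norm_cast
  | succ k ih =>
    rw [show 3 * (k + 1) + r = 3 * k + r + 3 by ring, card_idealTriples_add_three]
    push_cast
    rw [ih, ← show 3 * (k + 1) + r = 3 * k + r + 3 by ring, card_weightTriples_eq (k + 1) r hr]
    push_cast
    ring

theorem stmt15 (i : ℕ) (hi : 1 ≤ i) :
    (C3 (3 * (i - 1)) : ℚ) =
      (1 / 8) * (((i : ℚ) + 1) * (2 * (i : ℚ) ^ 2 + i + 1) - (1 + (-1 : ℚ) ^ i) / 2) ∧
    (C3 (3 * (i - 1) + 1) : ℚ) =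
      (1 / 8) * (((i : ℚ) + 1) * (2 * (i : ℚ) ^ 2 + 3 * i - 1) + (1 + (-1 : ℚ) ^ i) / 2) ∧
    (C3 (3 * (i - 1) + 2) : ℚ) =
      (1 / 8) * (((i : ℚ) + 1) * (2 * (i : ℚ) ^ 2 + 5 * i + 1) - (1 + (-1 : ℚ) ^ i) / 2) := by
  obtain ⟨k, rfl⟩ := Nat.exists_eq_add_of_le' hi
  simp only [Nat.add_sub_cancel, C3_eq_card_idealTriples]
  push_cast
  refine ⟨?_, ?_, ?_⟩
  · linear_combination card_idealTriples_eq k 0 (by norm_num)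
  · linear_combination card_idealTriples_eq k 1 (by norm_num)
  · linear_combination card_idealTriples_eq k 2 (by norm_num)
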